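/- arXiv:1504.02430 — 16 statements merged into one kernel-verified Lean document; each statement's English description precedes it below -/
import Mathlib

section
/- In any symmetric quandle A, the ternary operation defined by p(a,b,c) = (a ◁ c) ◁⁻¹ b satisfies the Mal'tsev identities p(a,a,b) = b and p(a,b,b) = a for all a, b ∈ A. -/
/-- A quandle: a set with two binary operations `act` (◁) and `inv` (◁⁻¹)
satisfying idempotency, right invertibility and self-distributivity. -/
structure QuandleStr (A : Type*) where
  act : A → A → A
  inv : A → A → A
  act_self : ∀ a, act a a = a
  inv_self : ∀ a, inv a a = a
  inv_act : ∀ a b, inv (act a b) b = a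
  act_inv : ∀ a b, act (inv a b) b = a
  act_distrib : ∀ a b c, act (act a b) c = act (act a c) (act b c)
  inv_distrib : ∀ a b c, inv (inv a b) c = inv (inv a c) (inv b c)

/-- In any symmetric quandle, `p(a,b,c) = (a ◁ c) ◁⁻¹ b` satisfies the Mal'tsev
identities `p(a,a,b) = b` and `p(a,b,b) = a`. -/
theorem stmt0 {A : Type*} (Q : QuandleStr A)
    (hsym : ∀ a b : A, Q.act a b = Q.act b a) :
    ∀ a b : A, Q.inv (Q.act a b) a = b ∧ Q.inv (Q.act a b) b = a := by
  intro a b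
  refine ⟨?_, Q.inv_act a b⟩
  rw [hsym]; exact Q.inv_act b a
end

section
/- For a quandle A, the identity (a ◁ b) ◁ (c ◁ d) = (a ◁ c) ◁ (b ◁ d) holds for all a, b, c, d ∈ A if and only if the identity (a ◁ b) ◁⁻¹ (c ◁ d) = (a ◁⁻¹ c) ◁ (b ◁⁻¹ d) holds for all a, b, c, d ∈ A. -/
/-- A quandle is abelian, i.e. (a ◁ b) ◁ (c ◁ d) = (a ◁ c) ◁ (b ◁ d) for all a,b,c,d,
iff it satisfies (a ◁ b) ◁⁻¹ (c ◁ d) = (a ◁⁻¹ c) ◁ (b ◁⁻¹ d) for all a,b,c,d. -/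
theorem stmt1 {A : Type*} (Q : QuandleStr A) :
    (∀ a b c d : A, Q.act (Q.act a b) (Q.act c d) = Q.act (Q.act a c) (Q.act b d)) ↔
    (∀ a b c d : A, Q.inv (Q.act a b) (Q.act c d) = Q.act (Q.inv a c) (Q.inv b d)) := by
  constructor
  · intro H a b c d
    have h := H (Q.inv a c) (Q.inv b d) c d
    rw [Q.act_inv, Q.act_inv] at h
    rw [← h, Q.inv_act]
  · intro H a b c d
    have h := H (Q.act a c) (Q.act b d) c d
    rw [Q.inv_act, Q.inv_act] at h
    have := congrArg (fun x => Q.act x (Q.act c d)) h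
    simpa [Q.act_inv] using this.symm
end

section
/- If A is an abelian symmetric quandle, then the map p : A × A × A → A defined by p(a,b,c) = (a ◁ c) ◁⁻¹ b is a quandle homomorphism from the product quandle A × A × A (with componentwise operations) to A; that is, for all a, b, c, x, y, z ∈ A one has p(a ◁ x, b ◁ y, c ◁ z) = p(a,b,c) ◁ p(x,y,z). Consequently every abelian symmetric quandle is an internal Mal'tsev algebra in the category of symmetric quandles. -/
/-- If A is an abelian symmetric quandle, the map p(a,b,c) = (a ◁ c) ◁⁻¹ b is a
quandle homomorphism from the product quandle A × A × A to A:
p(a ◁ x, b ◁ y, c ◁ z) = p(a,b,c) ◁ p(x,y,z); together with the Mal'tsev identities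
this makes A an internal Mal'tsev algebra in the category of symmetric quandles. -/
theorem stmt2 {A : Type*} (Q : QuandleStr A)
    (hsym : ∀ a b : A, Q.act a b = Q.act b a)
    (hab : ∀ a b c d : A, Q.act (Q.act a b) (Q.act c d) = Q.act (Q.act a c) (Q.act b d)) :
    (∀ a b c x y z : A,
      Q.inv (Q.act (Q.act a x) (Q.act c z)) (Q.act b y) =
        Q.act (Q.inv (Q.act a c) b) (Q.inv (Q.act x z) y)) ∧
    (∀ a b : A, Q.inv (Q.act a b) a = b) ∧
    (∀ a b : A, Q.inv (Q.act a b) b = a) := by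
  refine ⟨?_, ?_, ?_⟩
  · intro a b c x y z
    have key : Q.act (Q.act (Q.inv (Q.act a c) b) (Q.inv (Q.act x z) y)) (Q.act b y)
        = Q.act (Q.act a c) (Q.act x z) := by
      rw [hab, Q.act_inv, Q.act_inv]
    rw [hab a x c z, ← key, Q.inv_act]
  · intro a b
    rw [hsym, Q.inv_act]
  · intro a b
    rw [Q.inv_act]
end

section
/- Let A be a symmetric quandle such that the map p(a,b,c) = (a ◁ c) ◁⁻¹ b preserves the operation ◁ componentwise, i.e. p(a ◁ x, b ◁ y, c ◁ z) = p(a,b,c) ◁ p(x,y,z) for all a, b, c, x, y, z ∈ A. Then A is abelian, i.e. (a ◁ b) ◁ (c ◁ d) = (a ◁ c) ◁ (b ◁ d) for all a, b, c, d ∈ A. In particular (specializing to triples (a,b,a) and (x,y,x)) one obtains (a ◁ x) ◁⁻¹ (b ◁ y) = (a ◁⁻¹ b) ◁ (x ◁⁻¹ y) for all a, b, x, y ∈ A. -/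
/-- If A is a symmetric quandle such that p(a,b,c) = (a ◁ c) ◁⁻¹ b preserves ◁
componentwise, then A is abelian; in particular
(a ◁ x) ◁⁻¹ (b ◁ y) = (a ◁⁻¹ b) ◁ (x ◁⁻¹ y) for all a, b, x, y. -/
theorem stmt3 {A : Type*} (Q : QuandleStr A)
    (hsym : ∀ a b : A, Q.act a b = Q.act b a)
    (hhom : ∀ a b c x y z : A,
      Q.inv (Q.act (Q.act a x) (Q.act c z)) (Q.act b y) =
        Q.act (Q.inv (Q.act a c) b) (Q.inv (Q.act x z) y)) :
    (∀ a b c d : A, Q.act (Q.act a b) (Q.act c d) = Q.act (Q.act a c) (Q.act b d)) ∧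
    (∀ a b x y : A, Q.inv (Q.act a x) (Q.act b y) = Q.act (Q.inv a b) (Q.inv x y)) := by
  have h2 : ∀ a b x y : A, Q.inv (Q.act a x) (Q.act b y) = Q.act (Q.inv a b) (Q.inv x y) := by
    intro a b x y
    have := hhom a b a x y x
    simpa [Q.act_self] using this
  refine ⟨fun a b c d => ?_, h2⟩
  have h := h2 (Q.act a c) c (Q.act b d) d
  rw [Q.inv_act, Q.inv_act] at h
  calc Q.act (Q.act a b) (Q.act c d)
      = Q.act (Q.inv (Q.act (Q.act a c) (Q.act b d)) (Q.act c d)) (Q.act c d) := by rw [h]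
    _ = Q.act (Q.act a c) (Q.act b d) := Q.act_inv _ _
end

section
/- Let f : A → B be a quandle homomorphism with symmetric fibers. Then f is Σ-special: for all a, a′ ∈ A with f(a) = f(a′) there exists k ∈ A with f(k) = f(a) and a ◁ k = a′ (namely k = a′ ◁⁻¹ a). -/
/-- A quandle homomorphism with symmetric fibers is Σ-special: whenever
f(a) = f(a′) there exists k (namely k = a′ ◁⁻¹ a) with f(k) = f(a) and a ◁ k = a′. -/
theorem stmt5 {A B : Type*} (QA : QuandleStr A) (QB : QuandleStr B) (f : A → B)
    (hf : ∀ a b : A, f (QA.act a b) = QB.act (f a) (f b))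
    (hsymfib : ∀ a a' : A, f a = f a' → QA.act a a' = QA.act a' a) :
    ∀ a a' : A, f a = f a' →
      f (QA.inv a' a) = f a ∧ QA.act a (QA.inv a' a) = a' := by
  intro a a' h
  set k := QA.inv a' a with hk
  have hka : QA.act k a = a' := QA.act_inv a' a
  have h1 : f k = f a := by
    have : QB.act (f k) (f a) = QB.act (f a) (f a) := by
      rw [← hf, hka, QB.act_self, h]
    have := congrArg (fun x => QB.inv x (f a)) this
    simpa [QB.inv_act] using this
  refine ⟨h1, ?_⟩
  rw [hsymfib a k h1.symm, hka]
end

section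
/- Let f : A → B be a quandle homomorphism with symmetric fibers. Then for all a, x, y ∈ A lying in the same fiber of f (that is, f(a) = f(x) = f(y)), the equality a ◁ x = a ◁ y implies x = y; in other words, within each fiber the left translation by any of its elements is injective. -/
/-- If f has symmetric fibers then, within each fiber, left translation by any
of its elements is injective. -/
theorem stmt6 {A B : Type*} (QA : QuandleStr A) (QB : QuandleStr B) (f : A → B)
    (hf : ∀ a b : A, f (QA.act a b) = QB.act (f a) (f b))
    (hsymfib : ∀ a a' : A, f a = f a' → QA.act a a' = QA.act a' a) :
    ∀ a x y : A, f a = f x → f a = f y → QA.act a x = QA.act a y → x = y := by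
  intro a x y hax hay h
  have hxa : QA.act x a = QA.act y a := by
    rw [← hsymfib a x hax, ← hsymfib a y hay, h]
  calc x = QA.inv (QA.act x a) a := (QA.inv_act x a).symm
    _ = QA.inv (QA.act y a) a := by rw [hxa]
    _ = y := QA.inv_act y a
end

section
/- Let f : A → B be a quandle homomorphism with symmetric fibers. Then for all b, c ∈ A with f(b) = f(c) there exists a unique k ∈ A such that f(k) = f(b) and b ◁ k = c. -/
/-- If f has symmetric fibers then for all b, c with f(b) = f(c) there is a
unique k with f(k) = f(b) and b ◁ k = c. -/
theorem stmt7 {A B : Type*} (QA : QuandleStr A) (QB : QuandleStr B) (f : A → B)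
    (hf : ∀ a b : A, f (QA.act a b) = QB.act (f a) (f b))
    (hsymfib : ∀ a a' : A, f a = f a' → QA.act a a' = QA.act a' a) :
    ∀ b c : A, f b = f c → ∃! k : A, f k = f b ∧ QA.act b k = c := by
  intro b c hbc
  have hfk : f (QA.inv c b) = f b := by
    have h : f (QA.act (QA.inv c b) b) = QB.act (f (QA.inv c b)) (f b) := hf _ _
    rw [QA.act_inv] at h
    have h2 := congrArg (fun x => QB.inv x (f b)) h
    simp only [QB.inv_act] at h2
    rw [← h2, ← hbc, QB.inv_self]
  refine ⟨QA.inv c b, ⟨hfk, ?_⟩, ?_⟩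
  · rw [hsymfib b (QA.inv c b) hfk.symm, QA.act_inv]
  · rintro k ⟨hk, hbk⟩
    have : QA.act k b = c := by rw [← hsymfib b k hk.symm, hbk]
    rw [← this, QA.inv_act]
end

section
/- Let f : A → B be a Σ-special quandle homomorphism and let R be any congruence on the quandle A. Then R permutes with the kernel congruence Eq(f) = {(a,a′) | f(a) = f(a′)} in the sense of composition of relations: for all a, c ∈ A, there exists b with (a,b) ∈ R and f(b) = f(c) if and only if there exists b′ with f(a) = f(b′) and (b′,c) ∈ R. -/
/-- A quandle homomorphism also preserves the inverse operation. -/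
lemma hf_inv {A B : Type*} (QA : QuandleStr A) (QB : QuandleStr B) (f : A → B)
    (hf : ∀ a b : A, f (QA.act a b) = QB.act (f a) (f b)) :
    ∀ x y : A, f (QA.inv x y) = QB.inv (f x) (f y) := by
  intro x y
  have h : f x = QB.act (f (QA.inv x y)) (f y) := by
    conv_lhs => rw [← QA.act_inv x y]
    rw [hf]
  rw [h, QB.inv_act]

/-- If f is a Σ-special quandle homomorphism, then any congruence R on A
permutes with the kernel congruence Eq(f). -/
theorem stmt8 {A B : Type*} (QA : QuandleStr A) (QB : QuandleStr B) (f : A → B)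
    (hf : ∀ a b : A, f (QA.act a b) = QB.act (f a) (f b))
    (hspecial : ∀ a a' : A, f a = f a' → ∃ k : A, f k = f a ∧ QA.act a k = a')
    (R : A → A → Prop) (hR : Equivalence R)
    (hRact : ∀ x x' y y' : A, R x x' → R y y' → R (QA.act x y) (QA.act x' y'))
    (hRinv : ∀ x x' y y' : A, R x x' → R y y' → R (QA.inv x y) (QA.inv x' y')) :
    ∀ a c : A, (∃ b : A, R a b ∧ f b = f c) ↔ (∃ b' : A, f a = f b' ∧ R b' c) := by
  intro a c
  constructor
  · rintro ⟨b, hab, hbc⟩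
    obtain ⟨k, hk, hbk⟩ := hspecial b c hbc
    refine ⟨QA.inv (QA.act a k) c, ?_, ?_⟩
    · rw [hf_inv QA QB f hf, hf, hk, hbc, QB.inv_act]
    · have h1 : R (QA.act a k) c := by
        rw [← hbk]; exact hRact a b k k hab (hR.refl k)
      have := hRinv (QA.act a k) c c c h1 (hR.refl c)
      rwa [QA.inv_self] at this
  · rintro ⟨b', hab', hb'c⟩
    obtain ⟨k, hk, hb'k⟩ := hspecial b' a hab'.symm
    refine ⟨QA.inv (QA.act c k) a, ?_, ?_⟩
    · have h1 : R (QA.act c k) a := by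
        rw [← hb'k]; exact hRact c b' k k (hR.symm hb'c) (hR.refl k)
      have := hRinv (QA.act c k) a a a h1 (hR.refl a)
      rw [QA.inv_self] at this
      exact hR.symm this
    · rw [hf_inv QA QB f hf, hf, hk, ← hab', QB.inv_act]
end

section
/- Let f : A → B be a split epimorphism of quandles with section s (f ∘ s = id_B) belonging to the class Σ: for every b ∈ B and a ∈ A with f(a) = b there exists k ∈ A with f(k) = b and s(b) ◁ k = a. Let p : E → B be a split epimorphism of quandles with section t. Then for every pair (e, a) ∈ E × A with p(e) = f(a) there exist x ∈ E and k ∈ A with p(x) = f(a) and f(k) = f(a) such that e = x ◁ t(f(k)) and a = s(p(x)) ◁ k; that is, (e,a) = (x, s(p(x))) ◁ (t(f(k)), k) in the product quandle E × A, where (x, s(p(x))) lies in the image of the map z ↦ (z, s(p(z))) and (t(f(k)), k) lies in the image of the map w ↦ (t(f(w)), w). In particular these two maps are jointly epimorphic onto the pullback {(e,a) | p(e) = f(a)}. -/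
/-- Lemma on jointly epimorphic maps into a pullback: given a split epimorphism
f : A → B with section s belonging to the class Σ, and a split epimorphism
p : E → B with section t, every element (e,a) of the pullback E ×_B A decomposes
as (e,a) = (x, s(p x)) ◁ (t(f k), k) in the product quandle, with (x, s(p x)) in
the image of z ↦ (z, s(p z)) and (t(f k), k) in the image of w ↦ (t(f w), w). -/
theorem stmt9 {A B E : Type*} (QA : QuandleStr A) (QB : QuandleStr B) (QE : QuandleStr E)
    (f : A → B) (s : B → A) (p : E → B) (t : B → E)
    (hf : ∀ a a' : A, f (QA.act a a') = QB.act (f a) (f a'))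
    (hs : ∀ b b' : B, s (QB.act b b') = QA.act (s b) (s b'))
    (hp : ∀ e e' : E, p (QE.act e e') = QB.act (p e) (p e'))
    (ht : ∀ b b' : B, t (QB.act b b') = QE.act (t b) (t b'))
    (hfs : ∀ b : B, f (s b) = b)
    (hpt : ∀ b : B, p (t b) = b)
    (hSigma : ∀ (b : B) (a : A), f a = b → ∃ k : A, f k = b ∧ QA.act (s b) k = a) :
    ∀ (e : E) (a : A), p e = f a →
      ∃ (x : E) (k : A), p x = f a ∧ f k = f a ∧
        e = QE.act x (t (f k)) ∧ a = QA.act (s (p x)) k := by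
  intro e a h
  obtain ⟨k, hk1, hk2⟩ := hSigma (f a) a rfl
  have hx : p (QE.inv e (t (f a))) = f a := by
    have h1 : p (QE.act (QE.inv e (t (f a))) (t (f a))) = p e := by
      rw [QE.act_inv]
    rw [hp, hpt] at h1
    calc p (QE.inv e (t (f a)))
        = QB.inv (QB.act (p (QE.inv e (t (f a)))) (f a)) (f a) := by rw [QB.inv_act]
      _ = QB.inv (p e) (f a) := by rw [h1]
      _ = f a := by rw [h, QB.inv_self]
  refine ⟨QE.inv e (t (f a)), k, hx, hk1, ?_, ?_⟩
  · rw [hk1, QE.act_inv]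
  · rw [hx, hk2]
end

section
/- Let R and S be congruences on a quandle A, with S a Σ-equivalence relation (for all (x,y) ∈ S there exists k with (x,k) ∈ S and x ◁ k = y). If p and q are two quandle homomorphisms from R ×_A S = {(x,y,z) ∈ A³ | x R y and y S z} to A both satisfying the partial Mal'tsev identities p(x,y,y) = x, p(x,x,y) = y, q(x,y,y) = x, q(x,x,y) = y, then p = q. (A connector between R and S is unique when it exists.) -/
/-- A connector between a congruence R and a Σ-congruence S on a quandle A is
unique: any two quandle homomorphisms on R ×_A S satisfying the partial
Mal'tsev identities agree on R ×_A S. -/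
theorem stmt11 {A : Type*} (Q : QuandleStr A)
    (R S : A → A → Prop) (hR : Equivalence R) (hS : Equivalence S)
    (hRact : ∀ x x' y y' : A, R x x' → R y y' → R (Q.act x y) (Q.act x' y'))
    (hRinv : ∀ x x' y y' : A, R x x' → R y y' → R (Q.inv x y) (Q.inv x' y'))
    (hSact : ∀ x x' y y' : A, S x x' → S y y' → S (Q.act x y) (Q.act x' y'))
    (hSinv : ∀ x x' y y' : A, S x x' → S y y' → S (Q.inv x y) (Q.inv x' y'))
    (hSigma : ∀ x y : A, S x y → ∃ k : A, S x k ∧ Q.act x k = y)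
    (p q : A → A → A → A)
    (hphom : ∀ x y z x' y' z' : A, R x y → S y z → R x' y' → S y' z' →
      p (Q.act x x') (Q.act y y') (Q.act z z') = Q.act (p x y z) (p x' y' z'))
    (hqhom : ∀ x y z x' y' z' : A, R x y → S y z → R x' y' → S y' z' →
      q (Q.act x x') (Q.act y y') (Q.act z z') = Q.act (q x y z) (q x' y' z'))
    (hp1 : ∀ x y : A, R x y → p x y y = x)
    (hp2 : ∀ x y : A, S x y → p x x y = y)
    (hq1 : ∀ x y : A, R x y → q x y y = x)
    (hq2 : ∀ x y : A, S x y → q x x y = y) :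
    ∀ x y z : A, R x y → S y z → p x y z = q x y z := by
  intro x y z hxy hyz
  obtain ⟨k, hyk, hk⟩ := hSigma y z hyz
  have h1 : R (Q.inv x y) y := by
    have h := hRinv x y y y hxy (hR.refl y)
    rwa [Q.inv_self] at h
  have eq1 := hphom (Q.inv x y) y y y y k h1 (hS.refl y) (hR.refl y) hyk
  have eq2 := hqhom (Q.inv x y) y y y y k h1 (hS.refl y) (hR.refl y) hyk
  rw [Q.act_inv, Q.act_self, hk, hp1 _ _ h1, hp2 _ _ hyk] at eq1
  rw [Q.act_inv, Q.act_self, hk, hq1 _ _ h1, hq2 _ _ hyk] at eq2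
  rw [eq1, eq2]
end

section
/- Let f : A → B be a surjective quandle homomorphism with abelian symmetric fibers, and suppose there is a connector between Eq(f) and the total relation A × A; equivalently, a quandle homomorphism p : {(x,y,z) ∈ A³ | f(y) = f(z)} → A with p(x,y,y) = x and p(x,x,y) = y. Then there exist an abelian symmetric quandle Q and a quandle isomorphism between the product quandle Q × A and the kernel congruence Eq(f) = {(a,a′) ∈ A × A | f(a) = f(a′)} regarded as a subquandle of A × A. -/
/-- The product of two quandles, with componentwise operations. -/
def QuandleStr.prod {A B : Type*} (QA : QuandleStr A) (QB : QuandleStr B) :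
    QuandleStr (A × B) where
  act x y := (QA.act x.1 y.1, QB.act x.2 y.2)
  inv x y := (QA.inv x.1 y.1, QB.inv x.2 y.2)
  act_self a := Prod.ext (QA.act_self a.1) (QB.act_self a.2)
  inv_self a := Prod.ext (QA.inv_self a.1) (QB.inv_self a.2)
  inv_act a b := Prod.ext (QA.inv_act a.1 b.1) (QB.inv_act a.2 b.2)
  act_inv a b := Prod.ext (QA.act_inv a.1 b.1) (QB.act_inv a.2 b.2)
  act_distrib a b c := Prod.ext (QA.act_distrib a.1 b.1 c.1) (QB.act_distrib a.2 b.2 c.2)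
  inv_distrib a b c := Prod.ext (QA.inv_distrib a.1 b.1 c.1) (QB.inv_distrib a.2 b.2 c.2)

universe u

/-- If f : A → B is a surjective quandle homomorphism with abelian symmetric
fibers admitting a connector between Eq(f) and A × A, then Eq(f) is isomorphic,
as a quandle, to a product Q × A with Q an abelian symmetric quandle. -/
theorem stmt12 {A B : Type u} (QA : QuandleStr A) (QB : QuandleStr B) (f : A → B)
    (hf : ∀ a b : A, f (QA.act a b) = QB.act (f a) (f b))
    (hsurj : Function.Surjective f)
    (hsymfib : ∀ a a' : A, f a = f a' → QA.act a a' = QA.act a' a)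
    (habfib : ∀ a b c d : A, f a = f b → f a = f c → f a = f d →
      QA.act (QA.act a b) (QA.act c d) = QA.act (QA.act a c) (QA.act b d))
    (p : A → A → A → A)
    (hphom : ∀ x y z x' y' z' : A, f y = f z → f y' = f z' →
      p (QA.act x x') (QA.act y y') (QA.act z z') = QA.act (p x y z) (p x' y' z'))
    (hp1 : ∀ x y : A, p x y y = x)
    (hp2 : ∀ x y : A, f x = f y → p x x y = y) :
    ∃ (Q : Type u) (QQ : QuandleStr Q),
      (∀ q q' : Q, QQ.act q q' = QQ.act q' q) ∧
      (∀ q1 q2 q3 q4 : Q,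
        QQ.act (QQ.act q1 q2) (QQ.act q3 q4) = QQ.act (QQ.act q1 q3) (QQ.act q2 q4)) ∧
      ∃ e : Q × A ≃ {x : A × A // f x.1 = f x.2},
        ∀ u v : Q × A,
          (e ((QQ.prod QA).act u v)).val =
            (QA.act (e u).val.1 (e v).val.1, QA.act (e u).val.2 (e v).val.2) := by
  rcases isEmpty_or_nonempty A with hA | hA
  · refine ⟨PUnit, ⟨fun a _ => a, fun a _ => a, fun _ => rfl, fun _ => rfl,
      fun _ _ => rfl, fun _ _ => rfl, fun _ _ _ => rfl, fun _ _ _ => rfl⟩,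
      fun q q' => Subsingleton.elim _ _, fun _ _ _ _ => Subsingleton.elim _ _, ?_⟩
    have h1 : IsEmpty (PUnit.{u+1} × A) := ⟨fun x => hA.false x.2⟩
    have h2 : IsEmpty {x : A × A // f x.1 = f x.2} := ⟨fun x => hA.false x.1.1⟩
    exact ⟨Equiv.equivOfIsEmpty _ _, fun u => isEmptyElim u⟩
  · obtain ⟨a0⟩ := hA
    have hfinv : ∀ a b : A, f (QA.inv a b) = QB.inv (f a) (f b) := by
      intro a b
      have h := hf (QA.inv a b) b
      rw [QA.act_inv] at h
      rw [h, QB.inv_act]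
    have hcancel : ∀ s t c : A, QA.act s c = QA.act t c → s = t := by
      intro s t c h
      have h2 := congrArg (fun z => QA.inv z c) h
      simpa [QA.inv_act] using h2
    have hcancelB : ∀ s t c : B, QB.act s c = QB.act t c → s = t := by
      intro s t c h
      have h2 := congrArg (fun z => QB.inv z c) h
      simpa [QB.inv_act] using h2
    have hE : ∀ x y z : A, f y = f z → QA.act (p x y z) y = QA.act x z := by
      intro x y z h
      have h2 := hphom x y z z z y h h.symm
      rw [hp2 z y h.symm, hsymfib z y h.symm, hp1] at h2
      exact h2.symm
    have hfp : ∀ x y z : A, f y = f z → f (p x y z) = f x := by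
      intro x y z h
      have h1 := congrArg f (hE x y z h)
      rw [hf, hf, h] at h1
      exact hcancelB _ _ _ h1
    have hkey1 : ∀ a q : A, f q = f a0 → p a0 a (p a a0 q) = q := by
      intro a q hq
      have hu : f (p a a0 q) = f a := hfp a a0 q hq.symm
      have e1 : QA.act (p a0 a (p a a0 q)) a = QA.act a0 (p a a0 q) :=
        hE a0 a (p a a0 q) hu.symm
      have e2 := hphom a0 a0 a0 a a0 q rfl hq.symm
      rw [hp1 a0 a0] at e2
      have e3 := hphom a0 a0 q a a0 a0 hq.symm rfl
      rw [hp2 a0 q hq.symm, hp1 a a0] at e3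
      rw [hsymfib a0 q hq.symm] at e2
      have e4 : QA.act a0 (p a a0 q) = QA.act q a := by
        rw [← e2, ← e3]
      rw [e4] at e1
      exact hcancel _ _ _ e1
    have hkey2 : ∀ x1 x2 : A, f x1 = f x2 → p x1 a0 (p a0 x1 x2) = x2 := by
      intro x1 x2 hx
      have hv : f (p a0 x1 x2) = f a0 := hfp a0 x1 x2 hx
      have e1 : QA.act (p x1 a0 (p a0 x1 x2)) a0 = QA.act x1 (p a0 x1 x2) :=
        hE x1 a0 (p a0 x1 x2) hv.symm
      have e2 := hphom x1 x1 x1 a0 x1 x2 rfl hx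
      rw [hp1 x1 x1] at e2
      have e3 := hphom x1 x1 x2 a0 x1 x1 hx rfl
      rw [hp2 x1 x2 hx, hp1 a0 x1] at e3
      rw [hsymfib x1 x2 hx] at e2
      have e4 : QA.act x1 (p a0 x1 x2) = QA.act x2 a0 := by
        rw [← e2, ← e3]
      rw [e4] at e1
      exact hcancel _ _ _ e1
    refine ⟨{a : A // f a = f a0},
      ⟨fun q q' => ⟨QA.act q.1 q'.1, by rw [hf, q.2, q'.2, QB.act_self]⟩,
       fun q q' => ⟨QA.inv q.1 q'.1, by rw [hfinv, q.2, q'.2, QB.inv_self]⟩,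
       fun q => Subtype.ext (QA.act_self q.1),
       fun q => Subtype.ext (QA.inv_self q.1),
       fun q q' => Subtype.ext (QA.inv_act q.1 q'.1),
       fun q q' => Subtype.ext (QA.act_inv q.1 q'.1),
       fun a b c => Subtype.ext (QA.act_distrib a.1 b.1 c.1),
       fun a b c => Subtype.ext (QA.inv_distrib a.1 b.1 c.1)⟩,
      fun q q' => Subtype.ext (hsymfib q.1 q'.1 (q.2.trans q'.2.symm)),
      fun q1 q2 q3 q4 => Subtype.ext (habfib q1.1 q2.1 q3.1 q4.1
        (q1.2.trans q2.2.symm) (q1.2.trans q3.2.symm) (q1.2.trans q4.2.symm)),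
      ?_⟩
    refine ⟨⟨fun u => ⟨(p u.2 a0 u.1.1, u.2), hfp u.2 a0 u.1.1 u.1.2.symm⟩,
      fun x => (⟨p a0 x.1.2 x.1.1, hfp a0 x.1.2 x.1.1 x.2.symm⟩, x.1.2),
      ?_, ?_⟩, ?_⟩
    · intro u
      refine Prod.ext (Subtype.ext ?_) rfl
      exact hkey1 u.2 u.1.1 u.1.2
    · intro x
      refine Subtype.ext (Prod.ext ?_ rfl)
      exact hkey2 x.1.2 x.1.1 x.2.symm
    · intro u v
      refine Prod.ext ?_ rfl
      have h := hphom u.2 a0 u.1.1 v.2 a0 v.1.1 u.1.2.symm v.1.2.symm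
      rw [QA.act_self a0] at h
      exact h
end

section
/- Let f : A → B and p : E → B be quandle homomorphisms, and let P = {(e,a) ∈ E × A | p(e) = f(a)} be the pullback, a subquandle of E × A, with first projection π₁ : P → E. (i) If f has abelian symmetric fibers then π₁ has abelian symmetric fibers. (ii) If p is surjective and π₁ has abelian symmetric fibers, then f has abelian symmetric fibers. -/
/-- A map f : A → B has symmetric fibers on a subset S: any two elements of S
in the same fiber commute for ◁. -/
def SymFibersOn {A B : Type*} (Q : QuandleStr A) (S : Set A) (f : A → B) : Prop :=
  ∀ a ∈ S, ∀ b ∈ S, f a = f b → Q.act a b = Q.act b a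

/-- A map f : A → B has abelian fibers on a subset S: the abelian identity holds
for any four elements of S lying in the same fiber. -/
def AbFibersOn {A B : Type*} (Q : QuandleStr A) (S : Set A) (f : A → B) : Prop :=
  ∀ a ∈ S, ∀ b ∈ S, ∀ c ∈ S, ∀ d ∈ S, f a = f b → f a = f c → f a = f d →
    Q.act (Q.act a b) (Q.act c d) = Q.act (Q.act a c) (Q.act b d)

/-- Pulling back along p preserves the property of having abelian symmetric
fibers; if moreover p is surjective, it also reflects it. Here
P = {(e,a) | p e = f a} is the pullback, a subquandle of E × A, and the first
projection π₁ : P → E is the pullback of f along p. -/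
theorem stmt13 {A B E : Type*} (QA : QuandleStr A) (QB : QuandleStr B) (QE : QuandleStr E)
    (f : A → B) (p : E → B)
    (hf : ∀ a a' : A, f (QA.act a a') = QB.act (f a) (f a'))
    (hp : ∀ e e' : E, p (QE.act e e') = QB.act (p e) (p e')) :
    ((SymFibersOn QA Set.univ f ∧ AbFibersOn QA Set.univ f) →
      (SymFibersOn (QE.prod QA) {x : E × A | p x.1 = f x.2} Prod.fst ∧
        AbFibersOn (QE.prod QA) {x : E × A | p x.1 = f x.2} Prod.fst)) ∧
    (Function.Surjective p →
      (SymFibersOn (QE.prod QA) {x : E × A | p x.1 = f x.2} Prod.fst ∧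
        AbFibersOn (QE.prod QA) {x : E × A | p x.1 = f x.2} Prod.fst) →
      (SymFibersOn QA Set.univ f ∧ AbFibersOn QA Set.univ f)) := by
  constructor
  · rintro ⟨hsym, hab⟩
    constructor
    · rintro ⟨e1, a1⟩ h1 ⟨e2, a2⟩ h2 (he : e1 = e2)
      subst he
      have hfa : f a1 = f a2 := by rw [← h1, ← h2]
      have := hsym a1 trivial a2 trivial hfa
      simp [QuandleStr.prod, this]
    · rintro ⟨e1, a1⟩ h1 ⟨e2, a2⟩ h2 ⟨e3, a3⟩ h3 ⟨e4, a4⟩ h4 (h12 : e1 = e2)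
        (h13 : e1 = e3) (h14 : e1 = e4)
      subst h12; subst h13; subst h14
      have f12 : f a1 = f a2 := by rw [← h1, ← h2]
      have f13 : f a1 = f a3 := by rw [← h1, ← h3]
      have f14 : f a1 = f a4 := by rw [← h1, ← h4]
      have := hab a1 trivial a2 trivial a3 trivial a4 trivial f12 f13 f14
      simp [QuandleStr.prod, this]
  · rintro hsurj ⟨hsym, hab⟩
    constructor
    · intro a1 _ a2 _ hfa
      obtain ⟨e, he⟩ := hsurj (f a1)
      have h1 : ((e, a1) : E × A) ∈ {x : E × A | p x.1 = f x.2} := he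
      have h2 : ((e, a2) : E × A) ∈ {x : E × A | p x.1 = f x.2} := by
        simpa [← hfa] using he
      have := hsym _ h1 _ h2 rfl
      exact congrArg Prod.snd this
    · intro a1 _ a2 _ a3 _ a4 _ f12 f13 f14
      obtain ⟨e, he⟩ := hsurj (f a1)
      have h1 : ((e, a1) : E × A) ∈ {x : E × A | p x.1 = f x.2} := he
      have h2 : ((e, a2) : E × A) ∈ {x : E × A | p x.1 = f x.2} := by
        simpa [← f12] using he
      have h3 : ((e, a3) : E × A) ∈ {x : E × A | p x.1 = f x.2} := by
        simpa [← f13] using he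
      have h4 : ((e, a4) : E × A) ∈ {x : E × A | p x.1 = f x.2} := by
        simpa [← f14] using he
      have := hab _ h1 _ h2 _ h3 _ h4 rfl rfl rfl
      exact congrArg Prod.snd this
end

section
/- Let f : A → B be a quandle homomorphism with abelian symmetric fibers, p : E → B a quandle homomorphism, and P = {(e,a) ∈ E × A | p(e) = f(a)} the pullback with first projection π₁. Suppose p_f : {(a,b,c) ∈ A³ | f(b) = f(c)} → A is a quandle homomorphism satisfying p_f(a,b,b) = a and p_f(a,a,b) = b. Then f(p_f(a,b,c)) = f(a) for all such triples, the map defined by p_{π₁}((e,a),(e′,b),(e′,c)) = (e, p_f(a,b,c)) on {((e,a),(e′,b),(e″,c)) ∈ P³ | e′ = e″} takes values in P, is a quandle homomorphism, and satisfies the identities p_{π₁}(X,Y,Y) = X and p_{π₁}(X,X,Y) = Y; that is, π₁ admits a connector between P × P and Eq(π₁). -/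
/-- If f : A → B has abelian symmetric fibers and carries a connector p_f
between A × A and Eq(f), then f(p_f(a,b,c)) = f(a) on the domain, and the map
p_{π₁}((e,a),(e′,b),(e′,c)) = (e, p_f(a,b,c)) takes values in the pullback
P = {(e,a) | p e = f a}, is a quandle homomorphism, and satisfies the Mal'tsev
identities: the pullback projection π₁ admits a connector between P × P and
Eq(π₁). -/
theorem stmt14 {A B E : Type*} (QA : QuandleStr A) (QB : QuandleStr B) (QE : QuandleStr E)
    (f : A → B) (p : E → B)
    (hf : ∀ a a' : A, f (QA.act a a') = QB.act (f a) (f a'))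
    (hp : ∀ e e' : E, p (QE.act e e') = QB.act (p e) (p e'))
    (hsymfib : ∀ a a' : A, f a = f a' → QA.act a a' = QA.act a' a)
    (habfib : ∀ a b c d : A, f a = f b → f a = f c → f a = f d →
      QA.act (QA.act a b) (QA.act c d) = QA.act (QA.act a c) (QA.act b d))
    (pf : A → A → A → A)
    (hpfhom : ∀ a b c a' b' c' : A, f b = f c → f b' = f c' →
      pf (QA.act a a') (QA.act b b') (QA.act c c') = QA.act (pf a b c) (pf a' b' c'))
    (hpf1 : ∀ a b : A, pf a b b = a)
    (hpf2 : ∀ a b : A, f a = f b → pf a a b = b) :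
    (∀ a b c : A, f b = f c → f (pf a b c) = f a) ∧
    (∀ X Y Z : E × A, p X.1 = f X.2 → p Y.1 = f Y.2 → p Z.1 = f Z.2 → Y.1 = Z.1 →
      p X.1 = f (pf X.2 Y.2 Z.2)) ∧
    (∀ X Y Z X' Y' Z' : E × A,
      p X.1 = f X.2 → p Y.1 = f Y.2 → p Z.1 = f Z.2 → Y.1 = Z.1 →
      p X'.1 = f X'.2 → p Y'.1 = f Y'.2 → p Z'.1 = f Z'.2 → Y'.1 = Z'.1 →
      ((QE.act X.1 X'.1, pf (QA.act X.2 X'.2) (QA.act Y.2 Y'.2) (QA.act Z.2 Z'.2)) : E × A) =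
        (QE.prod QA).act (X.1, pf X.2 Y.2 Z.2) (X'.1, pf X'.2 Y'.2 Z'.2)) ∧
    (∀ X Y : E × A, p X.1 = f X.2 → p Y.1 = f Y.2 → ((X.1, pf X.2 Y.2 Y.2) : E × A) = X) ∧
    (∀ X Y : E × A, p X.1 = f X.2 → p Y.1 = f Y.2 → X.1 = Y.1 →
      ((X.1, pf X.2 X.2 Y.2) : E × A) = Y) := by

  have key : ∀ a b c : A, f b = f c → f (pf a b c) = f a := by
    intro a b c hbc
    have h1 : pf (QA.act a c) (QA.act b c) (QA.act c b)
        = QA.act (pf a b c) (pf c c b) := hpfhom a b c c c b hbc hbc.symm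
    rw [hpf2 c b hbc.symm, hsymfib b c hbc, hpf1] at h1
    -- h1 : QA.act a c = QA.act (pf a b c) b
    have h2 : QB.act (f a) (f c) = QB.act (f (pf a b c)) (f b) := by
      rw [← hf, ← hf, h1]
    rw [← hbc] at h2
    have := congrArg (fun x => QB.inv x (f b)) h2
    simpa [QB.inv_act] using this.symm
  refine ⟨key, ?_, ?_, ?_, ?_⟩
  · intro X Y Z hX hY hZ hYZ
    have : f Y.2 = f Z.2 := by rw [← hY, ← hZ, hYZ]
    rw [key _ _ _ this, hX]
  · intro X Y Z X' Y' Z' hX hY hZ hYZ hX' hY' hZ' hYZ'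
    have h1 : f Y.2 = f Z.2 := by rw [← hY, ← hZ, hYZ]
    have h2 : f Y'.2 = f Z'.2 := by rw [← hY', ← hZ', hYZ']
    exact Prod.ext rfl (hpfhom _ _ _ _ _ _ h1 h2)
  · intro X Y _ _
    rw [hpf1]
  · intro X Y hX hY hXY
    have h1 : f X.2 = f Y.2 := by rw [← hX, ← hY, hXY]
    rw [hpf2 _ _ h1, hXY]
end

section
/- Let f : A → B be a surjective quandle homomorphism with abelian symmetric fibers, p : E → B a surjective quandle homomorphism, and P = {(e,a) ∈ E × A | p(e) = f(a)} the pullback with first projection π₁ : P → E. Suppose there exists a quandle homomorphism p_{π₁} : {(X,Y,Z) ∈ P³ | π₁(Y) = π₁(Z)} → P with p_{π₁}(X,Y,Y) = X and p_{π₁}(X,X,Y) = Y. Then the map p_f : {(a,b,c) ∈ A³ | f(b) = f(c)} → A defined by p_f(a,b,c) = (a ◁⁻¹ b) ◁ k, where k is the unique element with f(k) = f(b) and b ◁ k = c, is a quandle homomorphism satisfying p_f(a,b,b) = a and p_f(a,a,b) = b; hence f admits a connector between A × A and Eq(f). -/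
/-- If f : A → B is a surjective quandle homomorphism with abelian symmetric
fibers, p : E → B is a surjective quandle homomorphism, and the pullback
projection π₁ : P → E (P = {(e,a) | p e = f a}) admits a connector p_{π₁}
between P × P and Eq(π₁), then f admits a connector p_f between A × A and
Eq(f), given by p_f(a,b,c) = (a ◁⁻¹ b) ◁ k where k is the unique element with
f(k) = f(b) and b ◁ k = c. -/
theorem stmt15 {A B E : Type*} (QA : QuandleStr A) (QB : QuandleStr B) (QE : QuandleStr E)
    (f : A → B) (p : E → B)
    (hf : ∀ a a' : A, f (QA.act a a') = QB.act (f a) (f a'))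
    (hfsurj : Function.Surjective f)
    (hp : ∀ e e' : E, p (QE.act e e') = QB.act (p e) (p e'))
    (hpsurj : Function.Surjective p)
    (hsymfib : ∀ a a' : A, f a = f a' → QA.act a a' = QA.act a' a)
    (habfib : ∀ a b c d : A, f a = f b → f a = f c → f a = f d →
      QA.act (QA.act a b) (QA.act c d) = QA.act (QA.act a c) (QA.act b d))
    (ppi : E × A → E × A → E × A → E × A)
    (hval : ∀ X Y Z : E × A,
      p X.1 = f X.2 → p Y.1 = f Y.2 → p Z.1 = f Z.2 → Y.1 = Z.1 →
      p (ppi X Y Z).1 = f (ppi X Y Z).2)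
    (hppihom : ∀ X Y Z X' Y' Z' : E × A,
      p X.1 = f X.2 → p Y.1 = f Y.2 → p Z.1 = f Z.2 → Y.1 = Z.1 →
      p X'.1 = f X'.2 → p Y'.1 = f Y'.2 → p Z'.1 = f Z'.2 → Y'.1 = Z'.1 →
      ppi ((QE.prod QA).act X X') ((QE.prod QA).act Y Y') ((QE.prod QA).act Z Z') =
        (QE.prod QA).act (ppi X Y Z) (ppi X' Y' Z'))
    (hppi1 : ∀ X Y : E × A, p X.1 = f X.2 → p Y.1 = f Y.2 → ppi X Y Y = X)
    (hppi2 : ∀ X Y : E × A, p X.1 = f X.2 → p Y.1 = f Y.2 → X.1 = Y.1 → ppi X X Y = Y) :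
    ∃ pf : A → A → A → A,
      (∀ a b c k : A, f b = f c → f k = f b → QA.act b k = c →
        pf a b c = QA.act (QA.inv a b) k) ∧
      (∀ a b c a' b' c' : A, f b = f c → f b' = f c' →
        pf (QA.act a a') (QA.act b b') (QA.act c c') = QA.act (pf a b c) (pf a' b' c')) ∧
      (∀ a b : A, pf a b b = a) ∧
      (∀ a b : A, f a = f b → pf a a b = b) := by
  classical
  -- f and p preserve inv
  have hfi : ∀ a b : A, f (QA.inv a b) = QB.inv (f a) (f b) := by
    intro a b
    have h1 : f a = QB.act (f (QA.inv a b)) (f b) := by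
      rw [← hf, QA.act_inv]
    rw [h1, QB.inv_act]
  have hpi : ∀ e e' : E, p (QE.inv e e') = QB.inv (p e) (p e') := by
    intro e e'
    have h1 : p e = QB.act (p (QE.inv e e')) (p e') := by
      rw [← hp, QE.act_inv]
    rw [h1, QB.inv_act]
  set pf : A → A → A → A := fun a b c => QA.act (QA.inv a b) (QA.inv c b) with hpf
  -- basic fiber facts
  have hfib : ∀ b c : A, f b = f c → f (QA.inv c b) = f b := by
    intro b c h
    rw [hfi, ← h, QB.inv_self]
  have hact : ∀ b c : A, f b = f c → QA.act b (QA.inv c b) = c := by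
    intro b c h
    rw [hsymfib b (QA.inv c b) (hfib b c h).symm, QA.act_inv]
  -- key lemma: value of ppi on suitable triples
  have key : ∀ (a b c : A) (ea e : E), p ea = f a → p e = f b → f b = f c →
      ppi (ea, a) (e, b) (e, c) = (ea, pf a b c) := by
    intro a b c ea e hea he hbc
    set k := QA.inv c b with hk
    have hkb : f k = f b := hfib b c hbc
    have hbk : QA.act b k = c := hact b c hbc
    have h := hppihom (QE.inv ea e, QA.inv a b) (QE.inv e e, b) (QE.inv e e, b)
      (e, b) (e, b) (e, k)
      (by simp only; rw [hpi, hea, he, hfi])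
      (by simp only; rw [hpi, he, QB.inv_self])
      (by simp only; rw [hpi, he, QB.inv_self])
      rfl
      (by simpa using he)
      (by simpa using he)
      (by simp only; rw [he, hkb])
      rfl
    simp only [QuandleStr.prod] at h
    simp only [QE.act_inv, QA.act_inv, QA.act_self] at h
    rw [hbk] at h
    rw [hppi1 (QE.inv ea e, QA.inv a b) (QE.inv e e, b)
        (by simp only; rw [hpi, hea, he, hfi])
        (by simp only; rw [hpi, he, QB.inv_self]),
      hppi2 (e, b) (e, k) (by simpa using he) (by simp only; rw [he, hkb]) rfl] at h
    simpa only [QE.act_inv] using h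
  refine ⟨pf, ?_, ?_, ?_, ?_⟩
  · intro a b c k hbc hkb hbkc
    have hkk : QA.inv c b = k := by
      rw [← hbkc, hsymfib b k hkb.symm, QA.inv_act]
    simp only [hpf, hkk]
  · intro a b c a' b' c' hbc hbc'
    obtain ⟨ea, hea⟩ := hpsurj (f a)
    obtain ⟨e, he⟩ := hpsurj (f b)
    obtain ⟨ea', hea'⟩ := hpsurj (f a')
    obtain ⟨e', he'⟩ := hpsurj (f b')
    have h := hppihom (ea, a) (e, b) (e, c) (ea', a') (e', b') (e', c')
      hea he (by simp only; rw [he, hbc]) rfl hea' he'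
      (by simp only; rw [he', hbc']) rfl
    simp only [QuandleStr.prod] at h
    rw [key a b c ea e hea he hbc, key a' b' c' ea' e' hea' he' hbc'] at h
    have h2 := key (QA.act a a') (QA.act b b') (QA.act c c')
      (QE.act ea ea') (QE.act e e')
      (by rw [hp, hf, hea, hea']) (by rw [hp, hf, he, he'])
      (by rw [hf, hf, hbc, hbc'])
    rw [h2] at h
    exact congrArg Prod.snd h
  · intro a b
    simp only [hpf, QA.inv_self, QA.act_inv]
  · intro a b hab
    simp only [hpf, QA.inv_self]
    rw [hsymfib a (QA.inv b a) (hfib a b hab).symm, QA.act_inv]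
end

section
/- Equip ℤ/2ℤ with the trivial quandle structure a ◁ b = a = a ◁⁻¹ b. Then the addition map is a quandle homomorphism from the product quandle to ℤ/2ℤ, and the map p(a,b,c) = a − b + c is a quandle homomorphism (ℤ/2ℤ)³ → ℤ/2ℤ satisfying p(a,a,b) = b and p(a,b,b) = a; yet this quandle is not symmetric, since 0 ◁ 1 ≠ 1 ◁ 0. Hence the unique homomorphism from this quandle to the one-element quandle is an algebraically central extension whose fiber is not a symmetric quandle. -/
/-- The trivial quandle structure on a type: a ◁ b = a = a ◁⁻¹ b. -/
def trivQ (A : Type*) : QuandleStr A where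
  act a _ := a
  inv a _ := a
  act_self _ := rfl
  inv_self _ := rfl
  inv_act _ _ := rfl
  act_inv _ _ := rfl
  act_distrib _ _ _ := rfl
  inv_distrib _ _ _ := rfl

/-- On ℤ/2ℤ with the trivial quandle structure: addition is a quandle
homomorphism from the product quandle; p(a,b,c) = a - b + c is a quandle
homomorphism (ℤ/2ℤ)³ → ℤ/2ℤ satisfying the Mal'tsev identities (so it is a
connector exhibiting the map to the one-element quandle as an algebraically
central extension); yet the quandle is not symmetric since 0 ◁ 1 ≠ 1 ◁ 0:
the fiber of this algebraically central extension is not symmetric. -/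
theorem stmt16 :
    (∀ a b a' b' : ZMod 2,
      (trivQ (ZMod 2)).act a b + (trivQ (ZMod 2)).act a' b' =
        (trivQ (ZMod 2)).act (a + a') (b + b')) ∧
    (∀ a b c a' b' c' : ZMod 2,
      (trivQ (ZMod 2)).act a a' - (trivQ (ZMod 2)).act b b' + (trivQ (ZMod 2)).act c c' =
        (trivQ (ZMod 2)).act (a - b + c) (a' - b' + c')) ∧
    (∀ a b : ZMod 2, a - a + b = b) ∧
    (∀ a b : ZMod 2, a - b + b = a) ∧
    (trivQ (ZMod 2)).act (0 : ZMod 2) 1 ≠ (trivQ (ZMod 2)).act 1 0 := by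
  refine ⟨fun a b a' b' => rfl, fun a b c a' b' c' => rfl, fun a b => by ring,
    fun a b => by ring, ?_⟩
  show (0 : ZMod 2) ≠ 1
  decide
end

section
/- Let A = {a,b,c,d} be the quandle with multiplication table a◁a=a, a◁b=c, a◁c=b, a◁d=a, b◁a=c, b◁b=b, b◁c=a, b◁d=b, c◁a=b, c◁b=a, c◁c=c, c◁d=c, d◁a=d, d◁b=d, d◁c=d, d◁d=d (with ◁⁻¹ = ◁, since this operation is involutive in each right argument), and let T = {x,y} be the two-element trivial quandle. Then the map f : A → T with f(a) = f(b) = f(c) = x and f(d) = y is a surjective quandle homomorphism with abelian symmetric fibers, but there is no quandle homomorphism P : {(u,v,w) ∈ A³ | f(v) = f(w)} → A satisfying P(u,v,v) = u and P(u,u,v) = v; that is, f is not an algebraically central extension. (Indeed Eq(f) has 10 elements, so it cannot be isomorphic to a product Q × A with Q an abelian symmetric quandle, since A has 4 elements.) -/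
/-- The quandle operation on A = {a,b,c,d} (encoded as Fin 4 with a = 0, b = 1,
c = 2, d = 3) given by the multiplication table of the paper's example. -/
def qact : Fin 4 → Fin 4 → Fin 4 :=
  ![![0, 2, 1, 0], ![2, 1, 0, 1], ![1, 0, 2, 2], ![3, 3, 3, 3]]

/-- The quandle A of the example; the operation is involutive in its right
argument, so ◁⁻¹ = ◁. -/
def exq : QuandleStr (Fin 4) where
  act := qact
  inv := qact
  act_self := by decide
  inv_self := by decide
  inv_act := by decide
  act_inv := by decide
  act_distrib := by decide
  inv_distrib := by decide

/-- The map f : A → T to the two-element trivial quandle T (on Bool) with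
f(a) = f(b) = f(c) = false and f(d) = true. -/
def exf : Fin 4 → Bool := fun x => x = 3

/-- f : A → T is a surjective quandle homomorphism with abelian symmetric
fibers, but there is no quandle homomorphism P on {(u,v,w) | f v = f w}
satisfying P(u,v,v) = u and P(u,u,v) = v: f is not an algebraically central
extension. -/
theorem stmt17 :
    Function.Surjective exf ∧
    (∀ x y : Fin 4, exf (exq.act x y) = (trivQ Bool).act (exf x) (exf y)) ∧
    (∀ x y : Fin 4, exf x = exf y → exq.act x y = exq.act y x) ∧
    (∀ x y z w : Fin 4, exf x = exf y → exf x = exf z → exf x = exf w →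
      exq.act (exq.act x y) (exq.act z w) = exq.act (exq.act x z) (exq.act y w)) ∧
    ¬ ∃ P : Fin 4 → Fin 4 → Fin 4 → Fin 4,
        (∀ x y z x' y' z' : Fin 4, exf y = exf z → exf y' = exf z' →
          P (exq.act x x') (exq.act y y') (exq.act z z') =
            exq.act (P x y z) (P x' y' z')) ∧
        (∀ x y : Fin 4, P x y y = x) ∧
        (∀ x y : Fin 4, exf x = exf y → P x x y = y) := by
  refine ⟨?_, ?_, ?_, ?_, ?_⟩
  · intro b; cases b
    · exact ⟨0, rfl⟩
    · exact ⟨3, rfl⟩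
  · decide
  · decide
  · decide
  · rintro ⟨P, hhom, hfst, hsnd⟩
    have key : ∀ x y : Fin 4, exq.act x y = 3 → x = 3 := by decide
    have h01 : exf (0 : Fin 4) = exf 1 := by decide
    have h10 : exf (1 : Fin 4) = exf 0 := by decide
    -- t = P 3 0 1 equals 3
    have e1 := hhom 3 0 1 3 1 0 h01 h10
    have e2 := hhom 3 1 0 3 0 1 h10 h01
    have e3 := hhom 0 0 1 3 1 0 h01 h10
    simp only [show exq.act (3:Fin 4) 3 = 3 from rfl, show exq.act (0:Fin 4) 1 = 2 from rfl,
      show exq.act (1:Fin 4) 0 = 2 from rfl, show exq.act (0:Fin 4) 3 = 0 from rfl,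
      hfst] at e1 e2 e3
    -- e1 : 3 = exq.act (P 3 0 1) (P 3 1 0)
    have ht : P 3 0 1 = 3 := key _ _ e1.symm
    have hs : P 3 1 0 = 3 := key _ _ e2.symm
    rw [hsnd 0 1 h01, hs] at e3
    exact absurd e3 (by decide)
end
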